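/- arXiv:1512.01490 — 3 statements merged into one kernel-verified Lean document; each statement's English description precedes it below -/
import Mathlib

section
/- Let X be a random vector with density f, φ measurable, and suppose E[exp(α φ(X))] < ∞ for α ∈ (-a, b). Let c: (-a, b) → ℝ be a twice-differentiable function such that α ↦ exp(-c(α)) E[exp(α φ(X))] is log-concave on (-a, b). Then for all α ∈ (-a, b), E[exp(α(φ(X) - E φ(X)))] ≤ exp(ψ_c(α)), where ψ_c(α) = c(α) - c(0) - c'(0) α. -/
open MeasureTheory ProbabilityTheory Real

/-! The function `α ↦ log E[exp(α φ(X))] - c(α)` is the cumulant generating function of `φ(X)`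
minus `c`; it is concave and differentiable at `0` with derivative `E φ(X) - c'(0)`, so it lies
below its tangent line at `0`. Exponentiating that tangent-line bound is the claim. -/

theorem ConcaveOn.le_add_mul_sub_of_hasDerivAt {s : Set ℝ} {g : ℝ → ℝ} {g' x y : ℝ}
    (hg : ConcaveOn ℝ s g) (hx : x ∈ s) (hy : y ∈ s) (hd : HasDerivAt g g' x) :
    g y ≤ g x + g' * (y - x) := by
  rcases lt_trichotomy y x with hyx | rfl | hxy
  · have hslope := hg.le_slope_of_hasDerivAt hy hx hyx hd
    rw [slope_def_field, le_div_iff₀ (sub_pos.2 hyx)] at hslope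
    linarith
  · simp
  · have hslope := hg.slope_le_of_hasDerivAt hx hy hxy hd
    rw [slope_def_field, div_le_iff₀ (sub_pos.2 hxy)] at hslope
    linarith

namespace ProbabilityTheory

variable {Ω : Type*} {m : MeasurableSpace Ω} {μ : Measure Ω} {X : Ω → ℝ}

theorem mgf_sub_integral_eq_exp [IsProbabilityMeasure μ] {t : ℝ}
    (ht : t ∈ integrableExpSet X μ) :
    mgf (fun ω => X ω - μ[X]) μ t = exp (cgf X μ t - t * μ[X]) := by
  simp_rw [sub_eq_add_neg, mgf_add_const, ← exp_cgf ht, ← exp_add, mul_neg]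

theorem hasDerivAt_cgf_zero [IsProbabilityMeasure μ] (h : 0 ∈ interior (integrableExpSet X μ)) :
    HasDerivAt (cgf X μ) μ[X] 0 := by
  simpa [deriv_cgf_zero h] using (analyticAt_cgf h).differentiableAt.hasDerivAt

theorem mgf_sub_integral_le_exp_of_concaveOn [IsProbabilityMeasure μ] {c : ℝ → ℝ} {s : Set ℝ}
    {t : ℝ} (hs : s ∈ nhds 0) (hsX : s ⊆ integrableExpSet X μ) (hc : DifferentiableAt ℝ c 0)
    (hconc : ConcaveOn ℝ s (fun u => cgf X μ u - c u)) (ht : t ∈ s) :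
    mgf (fun ω => X ω - μ[X]) μ t ≤ exp (c t - c 0 - deriv c 0 * t) := by
  have h0 : 0 ∈ interior (integrableExpSet X μ) :=
    interior_mono hsX (mem_interior_iff_mem_nhds.2 hs)
  have htangent := hconc.le_add_mul_sub_of_hasDerivAt (mem_of_mem_nhds hs) ht
    ((hasDerivAt_cgf_zero h0).sub hc.hasDerivAt)
  rw [cgf_zero] at htangent
  rw [mgf_sub_integral_eq_exp (hsX ht)]
  exact exp_le_exp.2 (by linarith)

end ProbabilityTheory

theorem stmt2_general
    {Ω : Type*} [MeasureSpace Ω] [IsProbabilityMeasure (ℙ : Measure Ω)]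
    (n : ℕ) (X : Ω → (Fin n → ℝ))
    (φ : (Fin n → ℝ) → ℝ)
    (a b : ℝ) (ha : 0 < a) (hb : 0 < b)
    (hL : ∀ α ∈ Set.Ioo (-a) b, Integrable (fun ω => Real.exp (α * φ (X ω))) ℙ)
    (c : ℝ → ℝ) (hc : ∀ α ∈ Set.Ioo (-a) b, ContDiffAt ℝ 2 c α)
    (hlc : ConcaveOn ℝ (Set.Ioo (-a) b)
      (fun α => Real.log (Real.exp (-c α) * ∫ ω, Real.exp (α * φ (X ω))))) :
    ∀ α ∈ Set.Ioo (-a) b,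
      (∫ ω, Real.exp (α * (φ (X ω) - ∫ ω', φ (X ω'))))
        ≤ Real.exp (c α - c 0 - deriv c 0 * α) := by
  intro α hα
  have h0 : (0 : ℝ) ∈ Set.Ioo (-a) b := ⟨neg_lt_zero.2 ha, hb⟩
  have hconc : ConcaveOn ℝ (Set.Ioo (-a) b) (fun u => cgf (fun ω => φ (X ω)) ℙ u - c u) :=
    hlc.congr fun u hu => by
      have hpos : 0 < ∫ ω, exp (u * φ (X ω)) := mgf_pos (hL u hu)
      simp only [cgf, mgf]
      rw [log_mul (exp_ne_zero _) hpos.ne', log_exp, neg_add_eq_sub]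
  exact mgf_sub_integral_le_exp_of_concaveOn (isOpen_Ioo.mem_nhds h0) hL
    ((hc 0 h0).differentiableAt two_ne_zero) hconc hα

/-- If `c` is twice differentiable on `(-a,b)` and
`α ↦ exp(-c(α)) E[exp(α φ(X))]` is log-concave on `(-a,b)`, then
`E[exp(α (φ(X) - E φ(X)))] ≤ exp(ψ_c(α))` for `α ∈ (-a,b)`, where
`ψ_c(α) = c(α) - c(0) - c'(0) α`. -/
theorem stmt2
    {Ω : Type*} [MeasureSpace Ω] [IsProbabilityMeasure (ℙ : Measure Ω)]
    (n : ℕ) (X : Ω → (Fin n → ℝ)) (hX : Measurable X)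
    (f : (Fin n → ℝ) → ℝ) (hf_nonneg : ∀ x, 0 ≤ f x)
    (hf_density : Measure.map X ℙ = volume.withDensity (fun x => ENNReal.ofReal (f x)))
    (φ : (Fin n → ℝ) → ℝ) (hφ : Measurable φ)
    (a b : ℝ) (ha : 0 < a) (hb : 0 < b)
    (hL : ∀ α ∈ Set.Ioo (-a) b, Integrable (fun ω => Real.exp (α * φ (X ω))) ℙ)
    (c : ℝ → ℝ) (hc : ∀ α ∈ Set.Ioo (-a) b, ContDiffAt ℝ 2 c α)
    (hlc : ConcaveOn ℝ (Set.Ioo (-a) b)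
      (fun α => Real.log (Real.exp (-c α) * ∫ ω, Real.exp (α * φ (X ω))))) :
    ∀ α ∈ Set.Ioo (-a) b,
      (∫ ω, Real.exp (α * (φ (X ω) - ∫ ω', φ (X ω'))))
        ≤ Real.exp (c α - c 0 - deriv c 0 * α) :=
  stmt2_general n X φ a b ha hb hL c hc hlc
end

section
/- Let s > 0 and let φ: [0, ∞) → [0, ∞) be an integrable s-concave function (i.e. φ^s is concave on its support). Then the function p ↦ B(p, 1/s + 1)^{-1} ∫₀^∞ t^{p-1} φ(t) dt is log-concave on (0, ∞), where B denotes the Beta function. -/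
/-!
Write `M(p) = ∫₀^∞ t^(p-1) φ(t) dt`. The profile `ξ(t) = c (1 - t/a)₊^(1/s)` has moments
`c a^p B(p, 1/s + 1)`, so log-concavity amounts to: if `M` agrees with these moments at `p < q`,
then it dominates them at every `r` in between. Since `φ^s` is concave on its support and `ξ^s` is
affine there, the set `{φ > ξ}` is an interval `(α, β)`. The weight
`t^(r-1) - A t^(p-1) - B t^(q-1)` vanishing at `α` and `β` has the sign of `φ - ξ` (in the variable
`u = t^(q-p)` it is `t^(p-1)` times the concave `u^θ` minus a chord), and integrating it against
`φ - ξ` gives `M(r) - c a^r B(r, 1/s + 1) ≥ 0`. Integrability and `s`-concavity force `φ` to have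
bounded support and to be bounded near `0`, which makes all moments of positive order finite.
-/

open MeasureTheory Real

/-- The Beta function `B(x,y) = Γ(x)Γ(y)/Γ(x+y) = ∫₀¹ t^{x-1}(1-t)^{y-1} dt`. -/
noncomputable def betaFn (x y : ℝ) : ℝ := Real.Gamma x * Real.Gamma y / Real.Gamma (x + y)

open Set Filter

def SConcave (s : ℝ) (φ : ℝ → ℝ) : Prop :=
  ∀ x ∈ Ici (0 : ℝ), ∀ y ∈ Ici (0 : ℝ), 0 < φ x * φ y → ∀ lam ∈ Icc (0 : ℝ) 1,
    ((1 - lam) * φ x ^ s + lam * φ y ^ s) ^ (1 / s) ≤ φ ((1 - lam) * x + lam * y)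

noncomputable def powMoment (φ : ℝ → ℝ) (p : ℝ) : ℝ := ∫ t in Ioi 0, t ^ (p - 1) * φ t

noncomputable def truncPow (k a t : ℝ) : ℝ := max (1 - t / a) 0 ^ k

theorem integrableOn_rpow_mul_Ioc {g : ℝ → ℝ} {p u b M : ℝ} (hp : 0 < p) (hu : 0 < u)
    (hg : IntegrableOn g (Ioc 0 b)) (hM : ∀ t ∈ Ioc 0 u, ‖g t‖ ≤ M) :
    IntegrableOn (fun t => t ^ (p - 1) * g t) (Ioc 0 b) := by
  have hpow : IntegrableOn (fun t : ℝ => t ^ (p - 1)) (Ioc 0 b) := by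
    have := intervalIntegral.intervalIntegrable_rpow' (a := 0) (b := b) (by linarith : -1 < p - 1)
    exact (intervalIntegrable_iff.1 this).mono_set
      (Ioc_subset_Ioc (min_le_left _ _) (le_max_right _ _))
  set K := max (u ^ (p - 1)) (b ^ (p - 1))
  -- Near `0` the weight is integrable and `g` is bounded; away from `0` the weight is bounded.
  refine Integrable.mono' ((hpow.const_mul M).add (hg.norm.const_mul K)) ?_ ?_
  · exact (ContinuousOn.aestronglyMeasurable (fun t ht => (continuousAt_rpow_const t _
      (Or.inl ht.1.ne')).continuousWithinAt) measurableSet_Ioc).mul hg.aestronglyMeasurable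
  refine (ae_restrict_iff' measurableSet_Ioc).2 (Eventually.of_forall fun t ht => ?_)
  have htp : 0 ≤ t ^ (p - 1) := rpow_nonneg ht.1.le _
  have hK0 : 0 ≤ K := (rpow_nonneg hu.le _).trans (le_max_left _ _)
  show ‖t ^ (p - 1) * g t‖ ≤ M * t ^ (p - 1) + K * ‖g t‖
  rw [norm_mul, norm_of_nonneg htp]
  rcases le_or_gt t u with htu | htu
  · nlinarith [hM t ⟨ht.1, htu⟩, mul_nonneg hK0 (norm_nonneg (g t))]
  · have hK : t ^ (p - 1) ≤ K := by
      rcases le_or_gt 1 p with h1p | h1p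
      · exact (rpow_le_rpow ht.1.le ht.2 (by linarith)).trans (le_max_right _ _)
      · exact (rpow_le_rpow_of_nonpos hu htu.le (by linarith)).trans (le_max_left _ _)
    have hM0 : 0 ≤ M := (norm_nonneg _).trans (hM u ⟨hu, le_rfl⟩)
    nlinarith [mul_le_mul_of_nonneg_right hK (norm_nonneg (g t))]

theorem powMoment_pos {φ : ℝ → ℝ} {p : ℝ} (hφ0 : ∀ t, 0 ≤ φ t)
    (hint : IntegrableOn (fun t => t ^ (p - 1) * φ t) (Ioi 0))
    (hsupp : volume (Function.support φ ∩ Ioi 0) ≠ 0) : 0 < powMoment φ p := by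
  refine (setIntegral_pos_iff_support_of_nonneg_ae ?_ hint).2 ?_
  · exact (ae_restrict_iff' measurableSet_Ioi).2 (Eventually.of_forall fun t ht =>
      mul_nonneg (rpow_nonneg (le_of_lt ht) _) (hφ0 t))
  · exact (pos_iff_ne_zero.2 hsupp).trans_le (measure_mono fun t ⟨ht, ht0⟩ =>
      ⟨mul_ne_zero (rpow_pos_of_pos ht0 _).ne' ht, ht0⟩)

theorem powMoment_eq_zero {φ : ℝ → ℝ} (hsupp : volume (Function.support φ ∩ Ioi 0) = 0) (p : ℝ) :
    powMoment φ p = 0 := by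
  refine integral_eq_zero_of_ae ((ae_restrict_iff' measurableSet_Ioi).2 ?_)
  filter_upwards [measure_eq_zero_iff_ae_notMem.1 hsupp] with t ht ht0
  rw [Function.notMem_support.1 fun h => ht ⟨h, ht0⟩, mul_zero, Pi.zero_apply]

theorem betaFn_eq_intervalIntegral {x y : ℝ} (hx : 0 < x) (hy : 0 < y) :
    betaFn x y = ∫ u in (0 : ℝ)..1, u ^ (x - 1) * (1 - u) ^ (y - 1) := by
  have hcomplex : Complex.betaIntegral x y
      = ((∫ u in (0 : ℝ)..1, u ^ (x - 1) * (1 - u) ^ (y - 1) : ℝ) : ℂ) := by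
    rw [Complex.betaIntegral, ← intervalIntegral.integral_ofReal]
    refine intervalIntegral.integral_congr fun u hu => ?_
    rw [uIcc_of_le zero_le_one] at hu
    simp only [Complex.ofReal_mul, Complex.ofReal_cpow hu.1,
      Complex.ofReal_cpow (sub_nonneg.2 hu.2), Complex.ofReal_sub, Complex.ofReal_one]
  change ProbabilityTheory.beta x y = _
  rw [ProbabilityTheory.beta_eq_betaIntegralReal x y hx hy, hcomplex, Complex.ofReal_re]

theorem continuous_truncPow {k : ℝ} (hk : 0 ≤ k) (a : ℝ) : Continuous (truncPow k a) :=
  ((continuous_const.sub (continuous_id.div_const a)).max continuous_const).rpow_const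
    fun _ => Or.inr hk

theorem truncPow_nonneg (k a t : ℝ) : 0 ≤ truncPow k a t := rpow_nonneg (le_max_right _ _) _

theorem truncPow_of_le {k a t : ℝ} (hk : 0 < k) (ha : 0 < a) (hat : a ≤ t) :
    truncPow k a t = 0 := by
  rw [truncPow, max_eq_right (by linarith [(one_le_div ha).2 hat]), zero_rpow hk.ne']

theorem integrableOn_rpow_mul_truncPow {k a p : ℝ} (hk : 0 < k) (ha : 0 < a) (hp : 0 < p) :
    IntegrableOn (fun t => t ^ (p - 1) * truncPow k a t) (Ioi 0) := by
  have hbound : ∀ t ∈ Ioc 0 a, ‖truncPow k a t‖ ≤ 1 := fun t ht => by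
    have : 0 < t / a := div_pos ht.1 ha
    rw [norm_of_nonneg (truncPow_nonneg k a t), truncPow]
    exact rpow_le_one (le_max_right _ _) (max_le (by linarith) zero_le_one) hk.le
  have hint : IntegrableOn (truncPow k a) (Ioc 0 a) :=
    (continuous_truncPow hk.le a).integrableOn_Icc.mono_set Ioc_subset_Icc_self
  refine (integrableOn_rpow_mul_Ioc hp ha hint hbound).of_forall_sdiff_eq_zero measurableSet_Ioi
    fun t ht => ?_
  have hat : a < t := lt_of_not_ge fun h => ht.2 ⟨ht.1, h⟩
  rw [truncPow_of_le hk ha hat.le, mul_zero]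

theorem powMoment_truncPow {k a p : ℝ} (hk : 0 < k) (ha : 0 < a) (hp : 0 < p) :
    powMoment (truncPow k a) p = a ^ p * betaFn p (k + 1) := by
  rw [powMoment, setIntegral_eq_of_subset_of_forall_sdiff_eq_zero measurableSet_Ioi
      Ioc_subset_Ioi_self fun t ht => ?_, ← intervalIntegral.integral_of_le ha.le,
    betaFn_eq_intervalIntegral hp (by linarith)]
  · calc ∫ t in (0 : ℝ)..a, t ^ (p - 1) * truncPow k a t
        = a • ∫ u in (0 : ℝ)..1, (a * u) ^ (p - 1) * truncPow k a (a * u) := by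
          rw [intervalIntegral.smul_integral_comp_mul_left (fun t => t ^ (p - 1) * truncPow k a t),
            mul_zero, mul_one]
      _ = a • ∫ u in (0 : ℝ)..1, a ^ (p - 1) * (u ^ (p - 1) * (1 - u) ^ (k + 1 - 1)) := by
          congr 1
          refine intervalIntegral.integral_congr fun u hu => ?_
          rw [uIcc_of_le zero_le_one] at hu
          simp only [truncPow, mul_div_cancel_left₀ _ ha.ne', max_eq_left (sub_nonneg.2 hu.2),
            add_sub_cancel_right, mul_rpow ha.le hu.1]
          ring
      _ = a ^ p * ∫ u in (0 : ℝ)..1, u ^ (p - 1) * (1 - u) ^ (k + 1 - 1) := by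
          rw [intervalIntegral.integral_const_mul, smul_eq_mul, ← mul_assoc, ← rpow_one_add' ha.le
            (by linarith), add_sub_cancel]
  · have hat : a < t := lt_of_not_ge fun h => ht.2 ⟨ht.1, h⟩
    rw [truncPow_of_le hk ha hat.le, mul_zero]

theorem mul_truncPow_lt_iff {s c a t y : ℝ} (hs : 0 < s) (hc : 0 ≤ c) (hy : 0 < y) :
    c * truncPow (1 / s) a t < y ↔ c ^ s * (1 - t / a) < y ^ s := by
  rcases le_or_gt (1 - t / a) 0 with hm | hm
  · rw [truncPow, max_eq_right hm, zero_rpow (one_div_pos.2 hs).ne', mul_zero]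
    exact iff_of_true hy
      ((mul_nonpos_of_nonneg_of_nonpos (rpow_nonneg hc s) hm).trans_lt (rpow_pos_of_pos hy s))
  · rw [truncPow, max_eq_left hm.le, ← rpow_lt_rpow_iff (by positivity) hy.le hs,
      mul_rpow hc (rpow_nonneg hm.le _), ← rpow_mul hm.le, one_div_mul_cancel hs.ne', rpow_one]

theorem exists_rpow_combination_sign {α β p q r : ℝ} (hα : 0 ≤ α) (hαβ : α < β) (hpr : p < r)
    (hrq : r < q) : ∃ A B : ℝ, ∀ t, 0 < t →
      (t ∈ Icc α β → 0 ≤ t ^ (r - 1) - A * t ^ (p - 1) - B * t ^ (q - 1)) ∧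
      (t ∉ Ioo α β → t ^ (r - 1) - A * t ^ (p - 1) - B * t ^ (q - 1) ≤ 0) := by
  have hqp : 0 < q - p := by linarith
  set θ := (r - p) / (q - p)
  have hθ0 : 0 < θ := div_pos (by linarith) hqp
  have hθ1 : θ < 1 := (div_lt_one hqp).2 (by linarith)
  set α' := α ^ (q - p)
  set β' := β ^ (q - p)
  have hα' : 0 ≤ α' := rpow_nonneg hα _
  have hαβ' : α' < β' := rpow_lt_rpow hα hαβ hqp
  -- In the variable `u = t ^ (q - p)` the combination is `t ^ (p - 1)` times
  -- `u ^ θ` minus its chord over `[α', β']`.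
  set B := (β' ^ θ - α' ^ θ) / (β' - α')
  set A := α' ^ θ - B * α'
  set h : ℝ → ℝ := fun u => u ^ θ - (B * u + A)
  have hconc : ConcaveOn ℝ (Ici 0) h :=
    (strictConcaveOn_rpow hθ0 hθ1).concaveOn.sub
      (((LinearMap.mulLeft ℝ B).convexOn (convex_Ici 0)).add_const A)
  have hhα : h α' = 0 := by simp only [h, A]; ring
  have hhβ : h β' = 0 := by
    have : B * (β' - α') = β' ^ θ - α' ^ θ := div_mul_cancel₀ _ (sub_pos.2 hαβ').ne'
    simp only [h, A]
    linear_combination -this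
  have hcomb : ∀ t, 0 < t →
      t ^ (r - 1) - A * t ^ (p - 1) - B * t ^ (q - 1) = t ^ (p - 1) * h (t ^ (q - p)) := by
    intro t ht
    have hr : t ^ (r - 1) = t ^ (p - 1) * (t ^ (q - p)) ^ θ := by
      rw [← rpow_mul ht.le, ← rpow_add ht, mul_div_cancel₀ _ hqp.ne']
      ring_nf
    have hq : t ^ (q - 1) = t ^ (p - 1) * t ^ (q - p) := by
      rw [← rpow_add ht]
      ring_nf
    simp only [h, hr, hq]
    ring
  have hu : ∀ t : ℝ, 0 < t → t ^ (q - p) ∈ Ici 0 := fun t ht => rpow_nonneg ht.le _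
  have hβ'mem : β' ∈ Ici 0 := hα'.trans hαβ'.le
  refine ⟨A, B, fun t ht => ⟨fun htI => ?_, fun htI => ?_⟩⟩ <;> rw [hcomb t ht]
  · have := hconc.min_le_of_mem_Icc hα' hβ'mem
      ⟨rpow_le_rpow hα htI.1 hqp.le, rpow_le_rpow ht.le htI.2 hqp.le⟩
    rw [hhα, hhβ, min_self] at this
    exact mul_nonneg (rpow_nonneg ht.le _) this
  · refine mul_nonpos_of_nonneg_of_nonpos (rpow_nonneg ht.le _) ?_
    rcases le_or_gt t α with htα | hαt
    · rw [← hhα]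
      exact hconc.left_le_of_le_right'' (hu t ht) hβ'mem (rpow_le_rpow ht.le htα hqp.le) hαβ'
        (hhα.trans hhβ.symm).le
    · have hβt : β ≤ t := le_of_not_gt fun htβ => htI ⟨hαt, htβ⟩
      rw [← hhβ]
      exact hconc.right_le_of_le_left'' hα' (hu t ht) hαβ'
        (rpow_le_rpow (hα.trans hαβ.le) hβt hqp.le) (hhβ.trans hhα.symm).le

theorem powMoment_eq_zero_of_ae_nonpos {δ : ℝ → ℝ} {p : ℝ}
    (hδ : ∀ᵐ t ∂volume.restrict (Ioi 0), δ t ≤ 0)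
    (hI : IntegrableOn (fun t => t ^ (p - 1) * δ t) (Ioi 0)) (h0 : powMoment δ p = 0) (r : ℝ) :
    powMoment δ r = 0 := by
  have hnonneg : 0 ≤ᵐ[volume.restrict (Ioi 0)] fun t => -(t ^ (p - 1) * δ t) := by
    filter_upwards [hδ, ae_restrict_mem measurableSet_Ioi] with t ht ht0
    exact neg_nonneg.2 (mul_nonpos_of_nonneg_of_nonpos (rpow_nonneg (le_of_lt ht0) _) ht)
  have hzero := (integral_eq_zero_iff_of_nonneg_ae hnonneg hI.neg).1 (by
    rw [integral_neg, neg_eq_zero]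
    exact h0)
  refine integral_eq_zero_of_ae ?_
  filter_upwards [hzero, ae_restrict_mem measurableSet_Ioi] with t ht ht0
  have hδt : δ t = 0 := by simpa [(rpow_pos_of_pos ht0 _).ne'] using ht
  simp [hδt]

theorem powMoment_nonneg_of_ordConnected {δ : ℝ → ℝ} {p q r : ℝ} (hpr : p < r) (hrq : r < q)
    (hconn : {t | 0 < t ∧ 0 < δ t}.OrdConnected) (hbdd : BddAbove {t | 0 < t ∧ 0 < δ t})
    (hIp : IntegrableOn (fun t => t ^ (p - 1) * δ t) (Ioi 0))
    (hIq : IntegrableOn (fun t => t ^ (q - 1) * δ t) (Ioi 0))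
    (hIr : IntegrableOn (fun t => t ^ (r - 1) * δ t) (Ioi 0))
    (hp : powMoment δ p = 0) (hq : powMoment δ q = 0) : 0 ≤ powMoment δ r := by
  set P := {t | 0 < t ∧ 0 < δ t}
  rcases P.subsingleton_or_nontrivial with hP | hP
  · have hδ : ∀ᵐ t ∂volume.restrict (Ioi 0), δ t ≤ 0 := by
      rw [ae_restrict_iff' measurableSet_Ioi]
      filter_upwards [measure_eq_zero_iff_ae_notMem.1 (hP.measure_zero volume)] with t ht ht0
      exact le_of_not_gt fun h => ht ⟨ht0, h⟩
    exact (powMoment_eq_zero_of_ae_nonpos hδ hIp hp r).ge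
  obtain ⟨x, hx, y, hy, hxy⟩ := hP
  have hbddB : BddBelow P := ⟨0, fun t ht => ht.1.le⟩
  have hαβ : sInf P < sSup P := by
    rcases hxy.lt_or_gt with h | h
    · exact (csInf_le hbddB hx).trans_lt (h.trans_le (le_csSup hbdd hy))
    · exact (csInf_le hbddB hy).trans_lt (h.trans_le (le_csSup hbdd hx))
  have hα : 0 ≤ sInf P := le_csInf ⟨x, hx⟩ fun t ht => ht.1.le
  obtain ⟨A, B, hAB⟩ := exists_rpow_combination_sign hα hαβ hpr hrq
  have hsign : ∀ t ∈ Ioi (0 : ℝ),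
      0 ≤ (t ^ (r - 1) - A * t ^ (p - 1) - B * t ^ (q - 1)) * δ t := by
    intro t ht
    by_cases hδt : 0 < δ t
    · exact mul_nonneg ((hAB t ht).1 ⟨csInf_le hbddB ⟨ht, hδt⟩, le_csSup hbdd ⟨ht, hδt⟩⟩) hδt.le
    · refine mul_nonneg_of_nonpos_of_nonpos ((hAB t ht).2 fun htI => hδt ?_) (not_lt.1 hδt)
      obtain ⟨a, ha, hat⟩ := exists_lt_of_csInf_lt ⟨x, hx⟩ htI.1
      obtain ⟨b, hb, htb⟩ := exists_lt_of_lt_csSup ⟨x, hx⟩ htI.2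
      exact (hconn.out ha hb ⟨hat.le, htb.le⟩).2
  have hlin : ∫ t in Ioi 0, (t ^ (r - 1) - A * t ^ (p - 1) - B * t ^ (q - 1)) * δ t
      = powMoment δ r - A * powMoment δ p - B * powMoment δ q := by
    simp only [sub_mul, mul_assoc]
    have hIrp : IntegrableOn (fun t => t ^ (r - 1) * δ t - A * (t ^ (p - 1) * δ t)) (Ioi 0) :=
      hIr.sub (hIp.const_mul A)
    rw [integral_sub hIrp (hIq.const_mul B),
      integral_sub hIr (hIp.const_mul A), integral_const_mul, integral_const_mul]
    rfl
  have := setIntegral_nonneg (μ := volume) measurableSet_Ioi hsign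
  rw [hlin, hp, hq] at this
  simpa using this

namespace SConcave

variable {s : ℝ} {φ : ℝ → ℝ}

theorem chord_le_rpow (hφ : SConcave s φ) (hs : 0 < s) {x w y : ℝ} (hx : 0 ≤ x)
    (hxw : x ≤ w) (hwy : w ≤ y) (hφx : 0 < φ x) (hφy : 0 < φ y) :
    (y - w) * φ x ^ s + (w - x) * φ y ^ s ≤ (y - x) * φ w ^ s := by
  rcases (hxw.trans hwy).eq_or_lt with rfl | hxy
  · obtain rfl : w = x := le_antisymm hwy hxw
    simp
  have hyx : y - x ≠ 0 := (sub_pos.2 hxy).ne'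
  set lam := (w - x) / (y - x)
  have hlam_mul : lam * (y - x) = w - x := div_mul_cancel₀ _ hyx
  have hlam : lam ∈ Icc (0 : ℝ) 1 :=
    ⟨div_nonneg (by linarith) (by linarith), (div_le_one (by linarith)).2 (by linarith)⟩
  have hw : (1 - lam) * x + lam * y = w := by linear_combination hlam_mul
  have hmix : 0 ≤ (1 - lam) * φ x ^ s + lam * φ y ^ s :=
    add_nonneg (mul_nonneg (by linarith [hlam.2]) (rpow_nonneg hφx.le s))
      (mul_nonneg hlam.1 (rpow_nonneg hφy.le s))
  have h := hφ x hx y (hx.trans (hxw.trans hwy)) (mul_pos hφx hφy) lam hlam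
  rw [hw] at h
  rw [one_div, rpow_inv_le_iff_of_pos hmix ((rpow_nonneg hmix _).trans h) hs] at h
  calc (y - w) * φ x ^ s + (w - x) * φ y ^ s
      = (y - x) * ((1 - lam) * φ x ^ s + lam * φ y ^ s) := by
        linear_combination (φ x ^ s - φ y ^ s) * hlam_mul
    _ ≤ (y - x) * φ w ^ s := by gcongr

theorem bddAbove_image_Ioc (hφ : SConcave s φ) (hs : 0 < s) (hφ0 : ∀ t, 0 ≤ φ t) {u v : ℝ}
    (hu : 0 < u) (huv : u < v) (hφv : 0 < φ v) : BddAbove (φ '' Ioc 0 u) := by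
  have hvu : 0 < v - u := sub_pos.2 huv
  have hM : 0 ≤ v / (v - u) * φ u ^ s :=
    mul_nonneg (div_pos (by linarith) hvu).le (rpow_nonneg (hφ0 u) s)
  refine ⟨(v / (v - u) * φ u ^ s) ^ s⁻¹, ?_⟩
  rintro _ ⟨t, ht, rfl⟩
  rcases (hφ0 t).eq_or_lt with h0 | hφt
  · rw [← h0]
    exact rpow_nonneg hM _
  rw [le_rpow_inv_iff_of_pos (hφ0 t) hM hs, div_mul_eq_mul_div, le_div_iff₀ hvu]
  have := hφ.chord_le_rpow hs ht.1.le ht.2 huv.le hφt hφv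
  nlinarith [mul_nonneg (sub_nonneg.2 ht.2) (rpow_nonneg hφv.le s),
    mul_nonneg ht.1.le (rpow_nonneg (hφ0 u) s)]

theorem exists_forall_gt_eq_zero (hφ : SConcave s φ) (hs : 0 < s) (hφ0 : ∀ t, 0 ≤ φ t)
    (hint : IntegrableOn φ (Ioi 0)) : ∃ T, ∀ t, T < t → φ t = 0 := by
  by_contra! hunb
  obtain ⟨u, hu, hφu⟩ := hunb 0
  replace hφu : 0 < φ u := (hφ0 u).lt_of_ne' hφu
  -- Along any chord from `u` to a far point of the support, `φ ^ s` keeps half its value at `u`.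
  have hlow : ∀ w, u ≤ w → (φ u ^ s / 2) ^ s⁻¹ ≤ φ w := by
    intro w huw
    obtain ⟨t, ht, hφt⟩ := hunb (2 * w - u)
    have := hφ.chord_le_rpow hs hu.le huw (by linarith) hφu ((hφ0 t).lt_of_ne' hφt)
    rw [rpow_inv_le_iff_of_pos (by positivity) (hφ0 w) hs]
    have htu : 0 < t - u := by linarith
    refine le_of_mul_le_mul_left ?_ htu
    nlinarith [mul_nonneg (sub_nonneg.2 huw) (rpow_nonneg (hφ0 t) s), rpow_nonneg (hφ0 u) s]
  have hconst : IntegrableOn (fun _ => (φ u ^ s / 2) ^ s⁻¹) (Ioi u) := by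
    refine Integrable.mono' (hint.mono_set (Ioi_subset_Ioi hu.le)) aestronglyMeasurable_const ?_
    refine (ae_restrict_iff' measurableSet_Ioi).2 (Eventually.of_forall fun w hw => ?_)
    rw [norm_of_nonneg (by positivity)]
    exact hlow w (le_of_lt hw)
  have hpos : 0 < (φ u ^ s / 2) ^ s⁻¹ := by positivity
  simp [integrableOn_const_iff, hpos.ne'] at hconst

theorem integrableOn_rpow_mul (hφ : SConcave s φ) (hs : 0 < s) (hφ0 : ∀ t, 0 ≤ φ t)
    (hint : IntegrableOn φ (Ioi 0)) {v : ℝ} (hv : 0 < v) (hφv : 0 < φ v) {p : ℝ} (hp : 0 < p) :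
    IntegrableOn (fun t => t ^ (p - 1) * φ t) (Ioi 0) := by
  obtain ⟨T, hT⟩ := hφ.exists_forall_gt_eq_zero hs hφ0 hint
  obtain ⟨M, hM⟩ := hφ.bddAbove_image_Ioc hs hφ0 (half_pos hv) (half_lt_self hv) hφv
  refine (integrableOn_rpow_mul_Ioc (b := T) (M := M) hp (half_pos hv)
    (hint.mono_set Ioc_subset_Ioi_self) fun t ht => ?_).of_forall_sdiff_eq_zero
    measurableSet_Ioi fun t ht => ?_
  · rw [norm_of_nonneg (hφ0 t)]
    exact hM ⟨t, ht, rfl⟩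
  · rw [hT t (lt_of_not_ge fun h => ht.2 ⟨ht.1, h⟩), mul_zero]

theorem ordConnected_pos_sub_truncPow (hφ : SConcave s φ) (hs : 0 < s) (hφ0 : ∀ t, 0 ≤ φ t)
    {a c : ℝ} (hc : 0 ≤ c) : {t | 0 < t ∧ 0 < φ t - c * truncPow (1 / s) a t}.OrdConnected := by
  refine ⟨fun x hx y hy w hw => ?_⟩
  rcases hw.1.eq_or_lt with rfl | hxw
  · exact hx
  have hξ : ∀ t, 0 ≤ c * truncPow (1 / s) a t := fun t => mul_nonneg hc (truncPow_nonneg _ _ t)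
  have hφx : 0 < φ x := by linarith [hξ x, hx.2]
  have hφy : 0 < φ y := by linarith [hξ y, hy.2]
  have hx' := (mul_truncPow_lt_iff hs hc hφx).1 (sub_pos.1 hx.2)
  have hy' := (mul_truncPow_lt_iff hs hc hφy).1 (sub_pos.1 hy.2)
  have hφchord := hφ.chord_le_rpow hs hx.1.le hw.1 hw.2 hφx hφy
  have hyx : 0 < y - x := by linarith [hw.2]
  -- `(c * truncPow (1 / s) a) ^ s` is affine where positive, so the chord inequality passes to it.
  have hlin : (y - x) * (c ^ s * (1 - w / a))
      = (y - w) * (c ^ s * (1 - x / a)) + (w - x) * (c ^ s * (1 - y / a)) := by ring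
  have hchord : (y - x) * (c ^ s * (1 - w / a)) < (y - x) * φ w ^ s := by
    rw [hlin]
    nlinarith [mul_le_mul_of_nonneg_left hx'.le (sub_nonneg.2 hw.2),
      mul_lt_mul_of_pos_left hy' (sub_pos.2 hxw)]
  have hφw : 0 < φ w := by
    refine (hφ0 w).lt_of_ne' fun h0 => ?_
    rw [h0, zero_rpow hs.ne'] at hφchord
    nlinarith [mul_le_mul_of_nonneg_left (rpow_nonneg hφx.le s) (sub_nonneg.2 hw.2),
      mul_pos (sub_pos.2 hxw) (rpow_pos_of_pos hφy s)]
  exact ⟨hx.1.trans hxw, sub_pos.2 ((mul_truncPow_lt_iff hs hc hφw).2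
    (lt_of_mul_lt_mul_left hchord hyx.le))⟩

theorem le_powMoment (hφ : SConcave s φ) (hs : 0 < s) (hφ0 : ∀ t, 0 ≤ φ t) {T : ℝ}
    (hT : ∀ t, T < t → φ t = 0)
    (hI : ∀ e : ℝ, 0 < e → IntegrableOn (fun t => t ^ (e - 1) * φ t) (Ioi 0))
    {p q r a c : ℝ} (hp : 0 < p) (hpr : p < r) (hrq : r < q) (ha : 0 < a) (hc : 0 ≤ c)
    (hP : powMoment φ p = c * a ^ p * betaFn p (1 / s + 1))
    (hQ : powMoment φ q = c * a ^ q * betaFn q (1 / s + 1)) :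
    c * a ^ r * betaFn r (1 / s + 1) ≤ powMoment φ r := by
  have hk : 0 < 1 / s := one_div_pos.2 hs
  set δ := fun t => φ t - c * truncPow (1 / s) a t
  have hIξ : ∀ e : ℝ, 0 < e →
      IntegrableOn (fun t => c * (t ^ (e - 1) * truncPow (1 / s) a t)) (Ioi 0) :=
    fun e he => (integrableOn_rpow_mul_truncPow hk ha he).const_mul c
  have hδ_eq : ∀ e : ℝ, (fun t => t ^ (e - 1) * δ t)
      = fun t => t ^ (e - 1) * φ t - c * (t ^ (e - 1) * truncPow (1 / s) a t) := fun e => by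
    ext t
    ring
  have hIδ : ∀ e : ℝ, 0 < e → IntegrableOn (fun t => t ^ (e - 1) * δ t) (Ioi 0) := fun e he => by
    rw [hδ_eq]
    exact (hI e he).sub (hIξ e he)
  have hδ : ∀ e : ℝ, 0 < e → powMoment δ e = powMoment φ e - c * a ^ e * betaFn e (1 / s + 1) :=
    fun e he => by
      rw [mul_assoc, ← powMoment_truncPow hk ha he, powMoment, hδ_eq,
        integral_sub (hI e he) (hIξ e he), integral_const_mul]
      rfl
  have hbdd : BddAbove {t | 0 < t ∧ 0 < δ t} := ⟨T, fun t ht => le_of_not_gt fun hTt => by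
    have := ht.2
    simp only [δ, hT t hTt] at this
    nlinarith [mul_nonneg hc (truncPow_nonneg (1 / s) a t)]⟩
  have hq : 0 < q := by linarith
  have hr0 : 0 < r := by linarith
  have hr := powMoment_nonneg_of_ordConnected hpr hrq
    (hφ.ordConnected_pos_sub_truncPow hs hφ0 hc) hbdd (hIδ p hp) (hIδ q hq) (hIδ r hr0)
    (by rw [hδ p hp, hP, sub_self]) (by rw [hδ q hq, hQ, sub_self])
  rw [hδ r hr0] at hr
  linarith

end SConcave

theorem concaveOn_log_of_mul_rpow_le {S : Set ℝ} {G : ℝ → ℝ} (hS : Convex ℝ S)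
    (hG : ∀ p ∈ S, 0 < G p)
    (h : ∀ p ∈ S, ∀ q ∈ S, ∀ r, p < r → r < q → ∀ a c, 0 < a → 0 < c →
      G p = c * a ^ p → G q = c * a ^ q → c * a ^ r ≤ G r) :
    ConcaveOn ℝ S fun p => log (G p) := by
  refine LinearOrder.concaveOn_of_lt hS fun x hx y hy hxy μ ν hμ hν hμν => ?_
  simp only [smul_eq_mul]
  obtain ⟨κ, hκ⟩ : ∃ κ, κ * (y - x) = log (G y) - log (G x) :=
    ⟨_, div_mul_cancel₀ _ (sub_pos.2 hxy).ne'⟩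
  have hchord : ∀ z, exp (log (G x) - κ * x) * exp κ ^ z = exp (log (G x) + κ * (z - x)) :=
    fun z => by rw [← exp_mul, ← exp_add]; ring_nf
  have hmem : μ * x + ν * y ∈ S := hS hx hy hμ.le hν.le hμν
  have hleft : μ * x + ν * y - x = ν * (y - x) := by linear_combination x * hμν
  have hright : y - (μ * x + ν * y) = μ * (y - x) := by linear_combination (-y) * hμν
  have := h x hx y hy (μ * x + ν * y)
    (sub_pos.1 (hleft ▸ mul_pos hν (sub_pos.2 hxy)))
    (sub_pos.1 (hright ▸ mul_pos hμ (sub_pos.2 hxy))) (exp κ) _ (exp_pos _) (exp_pos _)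
    (by rw [hchord, sub_self, mul_zero, add_zero, exp_log (hG x hx)])
    (by rw [hchord, hκ, add_sub_cancel, exp_log (hG y hy)])
  rw [hchord, ← le_log_iff_exp_le (hG _ hmem)] at this
  calc μ * log (G x) + ν * log (G y) = log (G x) + κ * (μ * x + ν * y - x) := by
        rw [hleft]
        linear_combination (-ν) * hκ + log (G x) * hμν
    _ ≤ _ := this

/-- For `s > 0` and `φ : [0,∞) → [0,∞)` integrable and `s`-concave,
`p ↦ B(p, 1/s + 1)⁻¹ ∫₀^∞ t^{p-1} φ(t) dt` is log-concave on `(0,∞)`. -/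
theorem stmt4
    (s : ℝ) (hs : 0 < s) (φ : ℝ → ℝ)
    (hφ_nonneg : ∀ t, 0 ≤ φ t)
    (hφ_int : IntegrableOn φ (Set.Ioi (0 : ℝ)))
    (hφ_conc : ∀ x ∈ Set.Ici (0 : ℝ), ∀ y ∈ Set.Ici (0 : ℝ), 0 < φ x * φ y →
      ∀ lam ∈ Set.Icc (0 : ℝ) 1,
        ((1 - lam) * φ x ^ s + lam * φ y ^ s) ^ (1 / s) ≤ φ ((1 - lam) * x + lam * y)) :
    ConcaveOn ℝ (Set.Ioi (0 : ℝ))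
      (fun p => Real.log ((betaFn p (1 / s + 1))⁻¹ * ∫ t in Set.Ioi (0 : ℝ), t ^ (p - 1) * φ t)) := by
  have hφ : SConcave s φ := hφ_conc
  change ConcaveOn ℝ (Ioi 0) fun p => log ((betaFn p (1 / s + 1))⁻¹ * powMoment φ p)
  by_cases hnull : volume (Function.support φ ∩ Ioi 0) = 0
  · simpa [powMoment_eq_zero hnull] using concaveOn_const (0 : ℝ) (convex_Ioi (0 : ℝ))
  obtain ⟨v, hφv, hv⟩ := nonempty_of_measure_ne_zero hnull
  obtain ⟨T, hT⟩ := hφ.exists_forall_gt_eq_zero hs hφ_nonneg hφ_int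
  have hI : ∀ e : ℝ, 0 < e → IntegrableOn (fun t => t ^ (e - 1) * φ t) (Ioi 0) := fun e he =>
    hφ.integrableOn_rpow_mul hs hφ_nonneg hφ_int hv ((hφ_nonneg v).lt_of_ne' hφv) he
  have hB : ∀ p, 0 < p → 0 < betaFn p (1 / s + 1) := fun p hp =>
    ProbabilityTheory.beta_pos hp (by positivity)
  refine concaveOn_log_of_mul_rpow_le (convex_Ioi 0) (fun p hp =>
    mul_pos (inv_pos.2 (hB p hp)) (powMoment_pos hφ_nonneg (hI p hp) hnull)) ?_
  intro p hp q hq r hpr hrq a c ha hc hP hQ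
  rw [inv_mul_eq_iff_eq_mul₀ (hB p hp).ne'] at hP
  rw [inv_mul_eq_iff_eq_mul₀ (hB q hq).ne'] at hQ
  rw [le_inv_mul_iff₀ (hB r (hp.trans hpr))]
  have := hφ.le_powMoment hs hφ_nonneg hT hI hp hpr hrq ha hc.le (by rw [hP]; ring)
    (by rw [hQ]; ring)
  linarith
end

section
/- Let U: ℝⁿ → [0, ∞] be a convex function that is positively homogeneous of degree 1, with C_U = |{x : U(x) ≤ 1}| < ∞. For s > 0 let f_{s,U}(x) = (1 - s U(x))₊^{1/s}. Then for all p > 0, ∫_{ℝⁿ} f_{s,U}(x)^p dx = C_U · n! / ((p+s)(p+2s)⋯(p+ns)). -/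
open MeasureTheory Real Set Finset Module
open scoped Nat ENNReal Pointwise

/-! By homogeneity the sublevel sets `{U ≤ c}` are the dilates `c • {U ≤ 1}`, of measure
`cⁿ C_U`, and the superlevel set `{f_{s,U}^p ≥ t}` is the sublevel set
`{U ≤ (1 - t^{s/p}) / s}`. The layer-cake formula therefore reduces the integral to
`C_U s⁻ⁿ ∫₀¹ (1 - t^{s/p})ⁿ dt`, and differentiating `t (1 - t^a)^{m+1}` gives the recursion
`∫₀¹ (1 - t^a)^{m+1} = (m + 1) / (m + 1 + a⁻¹) ∫₀¹ (1 - t^a)^m`. -/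

theorem intervalIntegral_one_sub_rpow_pow_succ {a : ℝ} (ha : 0 < a) (m : ℕ) :
    (1 + (m + 1) * a) * ∫ t in (0 : ℝ)..1, (1 - t ^ a) ^ (m + 1)
      = (m + 1) * a * ∫ t in (0 : ℝ)..1, (1 - t ^ a) ^ m := by
  have hcont : ∀ k : ℕ, Continuous fun t : ℝ => (1 - t ^ a) ^ k := fun k =>
    (continuous_const.sub (continuous_rpow_const ha.le)).pow k
  have hFTC := intervalIntegral.integral_eq_sub_of_hasDerivAt_of_le zero_le_one
    (f := fun t : ℝ => t * (1 - t ^ a) ^ (m + 1))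
    (f' := fun t => (1 + (m + 1) * a) * (1 - t ^ a) ^ (m + 1) - (m + 1) * a * (1 - t ^ a) ^ m)
    (continuous_id.mul (hcont _)).continuousOn ?_
    ((((hcont _).const_mul _).sub ((hcont _).const_mul _)).intervalIntegrable 0 1)
  · rw [intervalIntegral.integral_sub (((hcont _).const_mul _).intervalIntegrable 0 1)
      (((hcont _).const_mul _).intervalIntegrable 0 1), intervalIntegral.integral_const_mul,
      intervalIntegral.integral_const_mul] at hFTC
    simpa [sub_eq_zero] using hFTC
  · intro t ht
    have hta : t * (a * t ^ (a - 1)) = a * t ^ a := by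
      rw [mul_left_comm, ← rpow_one_add' ht.1.le (by simp [ha.ne'])]
      ring_nf
    have hpow : HasDerivAt (fun t : ℝ => (1 - t ^ a) ^ (m + 1))
        (((m + 1 : ℕ) : ℝ) * (1 - t ^ a) ^ m * (0 - a * t ^ (a - 1))) t :=
      ((hasDerivAt_const t 1).sub (hasDerivAt_rpow_const (Or.inl ht.1.ne'))).fun_pow (m + 1)
    refine ((hasDerivAt_id' t).fun_mul hpow).congr_deriv ?_
    push_cast
    linear_combination (-(m + 1 : ℝ) * (1 - t ^ a) ^ m) * hta

theorem intervalIntegral_one_sub_rpow_pow {a : ℝ} (ha : 0 < a) (m : ℕ) :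
    ∫ t in (0 : ℝ)..1, (1 - t ^ a) ^ m = m ! / ∏ i ∈ Icc 1 m, (i + a⁻¹) := by
  induction m with
  | zero => simp
  | succ m ih =>
    have hpos : 0 < (m + 1 : ℝ) + a⁻¹ := by positivity
    have hrec : ∫ t in (0 : ℝ)..1, (1 - t ^ a) ^ (m + 1)
        = (m + 1) / ((m + 1) + a⁻¹) * ∫ t in (0 : ℝ)..1, (1 - t ^ a) ^ m := by
      field_simp
      linear_combination intervalIntegral_one_sub_rpow_pow_succ ha m
    rw [hrec, ih, prod_Icc_succ_top (by omega), Nat.factorial_succ]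
    push_cast
    rw [div_mul_div_comm, mul_comm (_ + a⁻¹)]

theorem intervalIntegral_one_sub_rpow_div_pow {s p : ℝ} (hs : 0 < s) (hp : 0 < p) (n : ℕ) :
    ∫ t in (0 : ℝ)..1, ((1 - t ^ (s / p)) / s) ^ n = n ! / ∏ i ∈ Icc 1 n, (p + i * s) := by
  have hprod : ∏ i ∈ Icc 1 n, (p + i * s) = s ^ n * ∏ i ∈ Icc 1 n, (i + (s / p)⁻¹) := by
    rw [show s ^ n = ∏ _i ∈ Icc 1 n, s by simp, ← prod_mul_distrib]
    refine prod_congr rfl fun i _ => ?_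
    field_simp
    ring
  simp_rw [div_pow]
  rw [intervalIntegral.integral_div, intervalIntegral_one_sub_rpow_pow (by positivity), hprod,
    div_div, mul_comm]

theorem le_max_one_sub_mul_rpow_rpow_iff {s p t u : ℝ} (hs : 0 < s) (hp : 0 < p) (ht : 0 < t) :
    t ≤ (max (1 - s * u) 0 ^ (1 / s)) ^ p ↔ u ≤ (1 - t ^ (s / p)) / s := by
  have hpos : 0 < t ^ (s / p) := rpow_pos_of_pos ht _
  rw [← rpow_mul (le_max_right _ _), ← rpow_inv_le_iff_of_pos ht.le (le_max_right _ _)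
    (by positivity), le_div_iff₀ hs, one_div_mul_eq_div, inv_div, le_max_iff,
    or_iff_left (not_le.2 hpos)]
  constructor <;> intro h <;> linarith

section Cone

variable {E : Type*} {K : Set E} {U : E → ℝ}

theorem sep_le_eq_smul_sep_le_one [AddCommGroup E] [Module ℝ E]
    (hK_cone : ∀ t : ℝ, 0 < t → ∀ x ∈ K, t • x ∈ K)
    (hU_hom : ∀ t : ℝ, 0 < t → ∀ x ∈ K, U (t • x) = t * U x) {c : ℝ} (hc : 0 < c) :
    {x ∈ K | U x ≤ c} = c • {x ∈ K | U x ≤ 1} := by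
  ext x
  constructor
  · rintro ⟨hxK, hxU⟩
    refine mem_smul_set.2 ⟨c⁻¹ • x, ⟨hK_cone _ (inv_pos.2 hc) x hxK, ?_⟩, smul_inv_smul₀ hc.ne' x⟩
    rw [hU_hom _ (inv_pos.2 hc) x hxK, inv_mul_le_one₀ hc]
    exact hxU
  · rintro ⟨y, ⟨hyK, hyU⟩, rfl⟩
    refine ⟨hK_cone c hc y hyK, ?_⟩
    rw [hU_hom c hc y hyK]
    exact mul_le_of_le_one_right hc.le hyU

variable [NormedAddCommGroup E] [NormedSpace ℝ E] [MeasurableSpace E] [BorelSpace E]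
  [FiniteDimensional ℝ E] (μ : Measure E) [μ.IsAddHaarMeasure]

theorem addHaar_sep_le (hK_cone : ∀ t : ℝ, 0 < t → ∀ x ∈ K, t • x ∈ K)
    (hU_hom : ∀ t : ℝ, 0 < t → ∀ x ∈ K, U (t • x) = t * U x) {c : ℝ} (hc : 0 < c) :
    μ {x ∈ K | U x ≤ c} = ENNReal.ofReal (c ^ finrank ℝ E) * μ {x ∈ K | U x ≤ 1} := by
  rw [sep_le_eq_smul_sep_le_one hK_cone hU_hom hc, Measure.addHaar_smul_of_nonneg μ hc.le]

theorem ConvexOn.aemeasurable_restrict (hU : ConvexOn ℝ K U) : AEMeasurable U (μ.restrict K) := by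
  have hK_ae : interior K =ᵐ[μ] K := interior_subset.eventuallyLE.antisymm <| ae_le_set.2 <|
    measure_mono_null (sdiff_subset_sdiff_left subset_closure) (hU.1.addHaar_frontier μ)
  rw [← Measure.restrict_congr_set hK_ae]
  exact ((hU.subset interior_subset hU.1.interior).continuousOn isOpen_interior).aemeasurable
    isOpen_interior.measurableSet

theorem lintegral_addHaar_sep_le_one_sub_rpow_div
    (hK_cone : ∀ t : ℝ, 0 < t → ∀ x ∈ K, t • x ∈ K) (hU_nonneg : ∀ x ∈ K, 0 ≤ U x)
    (hU_hom : ∀ t : ℝ, 0 < t → ∀ x ∈ K, U (t • x) = t * U x) {a s : ℝ} (ha : 0 < a) (hs : 0 < s) :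
    ∫⁻ t in Ioi 0, μ {x ∈ K | U x ≤ (1 - t ^ a) / s}
      = μ {x ∈ K | U x ≤ 1} * ∫⁻ t in Ioo 0 1, ENNReal.ofReal (((1 - t ^ a) / s) ^ finrank ℝ E) := by
  have h_small : ∀ t ∈ Ioo (0 : ℝ) 1, μ {x ∈ K | U x ≤ (1 - t ^ a) / s}
      = μ {x ∈ K | U x ≤ 1} * ENNReal.ofReal (((1 - t ^ a) / s) ^ finrank ℝ E) := by
    intro t ht
    have : t ^ a < 1 := rpow_lt_one ht.1.le ht.2 ha
    rw [addHaar_sep_le μ hK_cone hU_hom (div_pos (by linarith) hs), mul_comm]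
  have h_large : ∀ t ∈ Ioi (1 : ℝ), μ {x ∈ K | U x ≤ (1 - t ^ a) / s} = 0 := by
    intro t ht
    have : 1 < t ^ a := one_lt_rpow ht ha
    convert measure_empty (μ := μ)
    refine eq_empty_of_forall_notMem fun x ⟨hxK, hxU⟩ => ?_
    have : (1 - t ^ a) / s < 0 := div_neg_of_neg_of_pos (by linarith) hs
    linarith [hU_nonneg x hxK]
  have h_cont : Continuous fun t : ℝ => ((1 - t ^ a) / s) ^ finrank ℝ E :=
    ((continuous_const.sub (continuous_rpow_const ha.le)).div_const s).pow _
  rw [← Ioo_union_Ici_eq_Ioi zero_lt_one,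
    lintegral_union measurableSet_Ici
      ((Iio_disjoint_Ici le_rfl).mono_left Set.Ioo_subset_Iio_self),
    setLIntegral_congr Ioi_ae_eq_Ici.symm, setLIntegral_congr_fun measurableSet_Ioi h_large,
    setLIntegral_congr_fun measurableSet_Ioo h_small,
    lintegral_const_mul _ h_cont.measurable.ennreal_ofReal, lintegral_zero, add_zero]

theorem setIntegral_max_one_sub_mul_rpow_rpow
    (hK_cone : ∀ t : ℝ, 0 < t → ∀ x ∈ K, t • x ∈ K) (hU_nonneg : ∀ x ∈ K, 0 ≤ U x)
    (hU_conv : ConvexOn ℝ K U) (hU_hom : ∀ t : ℝ, 0 < t → ∀ x ∈ K, U (t • x) = t * U x)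
    {s p : ℝ} (hs : 0 < s) (hp : 0 < p) :
    ∫ x in K, (max (1 - s * U x) 0 ^ (1 / s)) ^ p ∂μ
      = (μ {x ∈ K | U x ≤ 1}).toReal * (finrank ℝ E)! / ∏ i ∈ Icc 1 (finrank ℝ E), (p + i * s) := by
  set f : E → ℝ := fun x => (max (1 - s * U x) 0 ^ (1 / s)) ^ p
  have hf_nonneg : 0 ≤ᵐ[μ.restrict K] f :=
    ae_of_all _ fun _ => rpow_nonneg (rpow_nonneg (le_max_right _ _) _) _
  have hf_meas : AEMeasurable f (μ.restrict K) := by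
    have : Continuous fun u : ℝ => (max (1 - s * u) 0 ^ (1 / s)) ^ p :=
      (((continuous_const.sub (continuous_const.mul continuous_id)).max continuous_const).rpow_const
        fun _ => Or.inr (by positivity)).rpow_const fun _ => Or.inr hp.le
    exact this.measurable.comp_aemeasurable (hU_conv.aemeasurable_restrict μ)
  have h_super : ∀ t ∈ Ioi (0 : ℝ),
      μ.restrict K {x | t ≤ f x} = μ {x ∈ K | U x ≤ (1 - t ^ (s / p)) / s} := by
    intro t ht
    rw [Measure.restrict_apply₀' (hU_conv.1.nullMeasurableSet μ), inter_comm]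
    simp only [f, le_max_one_sub_mul_rpow_rpow_iff hs hp ht]
    rfl
  have h_nonneg : 0 ≤ᵐ[volume.restrict (Ioo (0 : ℝ) 1)]
      fun t => ((1 - t ^ (s / p)) / s) ^ finrank ℝ E := by
    filter_upwards [ae_restrict_mem measurableSet_Ioo] with t ht
    have : t ^ (s / p) ≤ 1 := rpow_le_one ht.1.le ht.2.le (by positivity)
    exact pow_nonneg (div_nonneg (by linarith) hs.le) _
  rw [integral_eq_lintegral_of_nonneg_ae hf_nonneg hf_meas.aestronglyMeasurable,
    lintegral_eq_lintegral_meas_le _ hf_nonneg hf_meas,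
    setLIntegral_congr_fun measurableSet_Ioi h_super,
    lintegral_addHaar_sep_le_one_sub_rpow_div μ hK_cone hU_nonneg hU_hom (by positivity) hs,
    ENNReal.toReal_mul, ← integral_eq_lintegral_of_nonneg_ae h_nonneg (by fun_prop),
    ← integral_Ioc_eq_integral_Ioo, ← intervalIntegral.integral_of_le zero_le_one,
    intervalIntegral_one_sub_rpow_div_pow hs hp, mul_div_assoc]

end Cone

theorem stmt10_general
    (n : ℕ) (K : Set (Fin n → ℝ))
    (hK_cone : ∀ t : ℝ, 0 < t → ∀ x ∈ K, t • x ∈ K)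
    (U : (Fin n → ℝ) → ℝ) (hU_nonneg : ∀ x ∈ K, 0 ≤ U x)
    (hU_conv : ConvexOn ℝ K U)
    (hU_hom : ∀ t : ℝ, 0 < t → ∀ x ∈ K, U (t • x) = t * U x)
    (s : ℝ) (hs : 0 < s) :
    ∀ p > (0 : ℝ),
      (∫ x in K, ((max (1 - s * U x) 0) ^ (1 / s)) ^ p)
        = (volume {x ∈ K | U x ≤ 1}).toReal * (n.factorial : ℝ)
            / ∏ i ∈ Finset.Icc 1 n, (p + (i : ℝ) * s) := by
  intro p hp
  simpa only [finrank_fin_fun] using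
    setIntegral_max_one_sub_mul_rpow_rpow volume hK_cone hU_nonneg hU_conv hU_hom hs hp

/-- Let `U` be convex and positively 1-homogeneous on a convex cone `K ⊆ ℝⁿ`
(modelling a `[0,∞]`-valued convex function, infinite outside `K`), with
`C_U = |{x ∈ K : U(x) ≤ 1}| < ∞`. For `s > 0` and `f_{s,U} = (1 - sU)₊^{1/s}` (vanishing
outside `K`), one has `∫ f_{s,U}^p = C_U n! / ((p+s)(p+2s)⋯(p+ns))` for every `p > 0`. -/
theorem stmt10
    (n : ℕ) (K : Set (Fin n → ℝ)) (hK : Convex ℝ K)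
    (hK_cone : ∀ t : ℝ, 0 < t → ∀ x ∈ K, t • x ∈ K)
    (U : (Fin n → ℝ) → ℝ) (hU_nonneg : ∀ x ∈ K, 0 ≤ U x)
    (hU_conv : ConvexOn ℝ K U)
    (hU_hom : ∀ t : ℝ, 0 < t → ∀ x ∈ K, U (t • x) = t * U x)
    (hfin : volume {x ∈ K | U x ≤ 1} < ⊤)
    (s : ℝ) (hs : 0 < s) :
    ∀ p > (0 : ℝ),
      (∫ x in K, ((max (1 - s * U x) 0) ^ (1 / s)) ^ p)
        = (volume {x ∈ K | U x ≤ 1}).toReal * (n.factorial : ℝ)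
            / ∏ i ∈ Finset.Icc 1 n, (p + (i : ℝ) * s) :=
  stmt10_general n K hK_cone U hU_nonneg hU_conv hU_hom s hs
end
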